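/- Fix positive integers r, l with r ≥ 2l, let n ≥ 2 and set ρ = n(r-l). Let D⁽³⁾ be an integer auxiliary matrix of type (n,r,0)_{r,l} and let D⁽²⁾ be any integer matrix of format l×(2ρ+l). Then there is a constant C = C(l) such that for all positive integers P one has J_n(P) ≤ C·P^{8l}·I(P, D⁽³⁾), where J_n(P) is formed from the pair (D⁽³⁾, D⁽²⁾). -/

import Mathlib

open MeasureTheory

noncomputable section

/-- `e(θ) = exp(2πiθ)`. -/
def eF (θ : ℝ) : ℂ := Complex.exp (2 * Real.pi * Complex.I * θ)

/-- The cubic Weyl sum `g(η) = Σ_{x=-P}^{P} e(ηx³)`. -/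
def gS (P : ℕ) (η : ℝ) : ℂ := ∑ x ∈ Finset.Icc (-(P : ℤ)) (P : ℤ), eF (η * (x : ℝ) ^ 3)

/-- The unit cube `[0,1]^k`. -/
def unitCube (k : ℕ) : Set (Fin k → ℝ) := Set.univ.pi fun _ => Set.Icc (0 : ℝ) 1

/-- A matrix is *totally non-singular* if every minor of every size is non-zero. -/
def TotallyNonSingular {a b : ℕ} (A : Matrix (Fin a) (Fin b) ℤ) : Prop :=
  ∀ (k : ℕ) (ri : Fin k → Fin a) (ci : Fin k → Fin b),
    Function.Injective ri → Function.Injective ci → (A.submatrix ri ci).det ≠ 0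

/-- The entry of `D` at natural-number indices `(i, j)`, defaulting to `0` out of range. -/
def entryZ {R S : ℕ} (D : Matrix (Fin R) (Fin S) ℤ) (i j : ℕ) : ℤ :=
  if h : i < R ∧ j < S then D ⟨i, h.1⟩ ⟨j, h.2⟩ else 0

/-- First row (0-indexed) of the `k`-th block (`1 ≤ k ≤ n`) of the linked-block part. -/
def auxRowStart (r l t : ℕ) (k : ℕ) : ℕ := if k = 1 then 0 else (t - l) + (k - 2) * (r - l)

/-- Number of rows of the `k`-th block. -/
def auxNumRows (r t : ℕ) (k : ℕ) : ℕ := if k = 1 then t else r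

/-- First column (0-indexed, within `V`) of the `k`-th block. -/
def auxColStart (r l t ω : ℕ) (k : ℕ) : ℕ :=
  if k = 1 then 0 else (t - l + ω) + (k - 2) * (r - l)

/-- Number of columns of the `k`-th block. -/
def auxNumCols (r l t ω : ℕ) (k : ℕ) : ℕ := if k = 1 then t - l + ω else r - l

/-- `D` is an *auxiliary matrix of type `(n,t,ω)_{r,l}`*:  it has format `R × S` with
`R = (n-1)(r-l)+t`, `S = 2R-l+ω`, its left `R × R` part is a non-singular diagonal matrix
`U`, and its right `R × (R-l+ω)` part `V` vanishes outside `n` totally non-singular blocks,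
the first of format `t × (t-l+ω)` in the top left corner, the subsequent ones of format
`r × (r-l)`, placed diagonally so that consecutive blocks overlap in exactly `l` rows. -/
def IsAuxiliary (r l n t ω : ℕ) {R S : ℕ} (D : Matrix (Fin R) (Fin S) ℤ) : Prop :=
  R = (n - 1) * (r - l) + t ∧ S = 2 * R - l + ω ∧
  (∀ i j : ℕ, i < R → j < R → i ≠ j → entryZ D i j = 0) ∧
  (∀ i : ℕ, i < R → entryZ D i i ≠ 0) ∧
  (∀ i j : ℕ, i < R → j < R - l + ω →
    (¬ ∃ k : ℕ, 1 ≤ k ∧ k ≤ n ∧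
        auxRowStart r l t k ≤ i ∧ i < auxRowStart r l t k + auxNumRows r t k ∧
        auxColStart r l t ω k ≤ j ∧ j < auxColStart r l t ω k + auxNumCols r l t ω k) →
    entryZ D i (R + j) = 0) ∧
  (∀ k : ℕ, 1 ≤ k → k ≤ n →
    TotallyNonSingular (Matrix.of
      fun (i : Fin (auxNumRows r t k)) (j : Fin (auxNumCols r l t ω k)) =>
        entryZ D (auxRowStart r l t k + (i : ℕ)) (R + (auxColStart r l t ω k + (j : ℕ)))))

/-- The mean value `I(P,D) = ∫_{[0,1]^R} ∏_{i=1}^{R} |g(θ_i)|² ∏_{i=R+1}^{S} |g(θ_i)|⁴ dη`,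
where `θ_j(η) = Σ_{i=1}^{R} d_{i,j} η_i`. -/
def IInt (P : ℕ) {R S : ℕ} (D : Matrix (Fin R) (Fin S) ℤ) : ℝ :=
  ∫ η in unitCube R,
    ∏ j : Fin S,
      ‖gS P (∑ i : Fin R, (D i j : ℝ) * η i)‖ ^ (if (j : ℕ) < R then 2 else 4)

/-- `I_{n,t}^{ω}(P)`: the supremum of `I(P,D)` over all integer auxiliary matrices `D`
of type `(n,t,ω)_{r,l}`. -/
def Isup (r l n t ω P : ℕ) : ℝ :=
  sSup {x : ℝ | ∃ (R S : ℕ) (D : Matrix (Fin R) (Fin S) ℤ),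
    IsAuxiliary r l n t ω D ∧ x = IInt P D}


/-- An `a × b` integer matrix (with `b ≥ a`) is *highly non-singular* if every `a × a`
submatrix formed by choosing `a` of its columns is non-singular. -/
def HighlyNonSingular {a b : ℕ} (A : Matrix (Fin a) (Fin b) ℤ) : Prop :=
  ∀ c : Fin a → Fin b, Function.Injective c → (A.submatrix id c).det ≠ 0

/-- The Weyl sum `f(α,β) = Σ_{x=-P}^{P} e(αx³ + βx²)`. -/
def fS (P : ℕ) (α β : ℝ) : ℂ :=
  ∑ x ∈ Finset.Icc (-(P : ℤ)) (P : ℤ), eF (α * (x : ℝ) ^ 3 + β * (x : ℝ) ^ 2)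

/-- The mean value `∫_{[0,1]^{a+l}} ∏_j |f(γ_{3,j}, γ_{2,j})|^{exps j} dα`, where
`γ_{3,j} = Σ_i d⁽³⁾_{i,j} α_{3,i}` and `γ_{2,j} = Σ_i d⁽²⁾_{i,j} α_{2,i}`. -/
def JInt (P : ℕ) {a l b : ℕ} (D3 : Matrix (Fin a) (Fin b) ℤ) (D2 : Matrix (Fin l) (Fin b) ℤ)
    (exps : ℕ → ℕ) : ℝ :=
  ∫ α3 in unitCube a, ∫ α2 in unitCube l,
    ∏ j : Fin b,
      ‖fS P (∑ i : Fin a, (D3 i j : ℝ) * α3 i) (∑ i : Fin l, (D2 i j : ℝ) * α2 i)‖ ^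
        exps (j : ℕ)

/-- The exponent pattern of the mean value `J_n(P)` (with `ρ = n(r-l)`, `0`-indexed):
for `n = 1` the exponents are `2` on the first `r` columns, `12` on the next `l`, and `4`
on the remaining ones; for `n ≥ 2` they are `2` on the first `ρ+l` columns, `8` on the
next `l`, `4` up to column `2ρ`, and `8` on the final `l` columns. -/
def Jexp (r l n : ℕ) (j : ℕ) : ℕ :=
  if n = 1 then (if j < r then 2 else if j < r + l then 12 else 4)
  else (if j < n * (r - l) + l then 2 else if j < n * (r - l) + 2 * l then 8
    else if j < 2 * (n * (r - l)) then 4 else 8)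

/-- Look up the `m`-th coordinate of a vector indexed by `Fin k`, defaulting to `0`. -/
def flookup {k : ℕ} (v : Fin k → ℝ) (m : ℕ) : ℝ := if h : m < k then v ⟨m, h⟩ else 0

end

/-!
The `2l` columns where `J_n` carries the exponent `8` but `I` only `4` are bounded
trivially by `|f_j| ≤ 2P + 1`, at a cost of `(2P+1)^{8l}`. After swapping the order of
integration, fix `α⁽²⁾`: expanding the remaining even powers and integrating over `α⁽³⁾`
leaves a sum over the solutions of the cubic system given by `D⁽³⁾`, each weighted by a
unimodular factor `e(quadratic phase)`. Its real part is at most the number of solutions,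
which is the same integral at `α⁽²⁾ = 0`, namely `I(P, D⁽³⁾)`.
-/

open MeasureTheory Finset
open scoped FourierTransform

section Character

lemma eF_eq_fourierChar (θ : ℝ) : eF θ = 𝐞 θ := by
  rw [eF, Real.fourierChar_apply]
  push_cast
  ring_nf

lemma eF_add (a b : ℝ) : eF (a + b) = eF a * eF b := by
  simp only [eF_eq_fourierChar, AddChar.map_add_eq_mul, Circle.coe_mul]

lemma eF_neg (a : ℝ) : eF (-a) = starRingEnd ℂ (eF a) := by
  rw [eF_eq_fourierChar, eF_eq_fourierChar, AddChar.map_neg_eq_inv, Circle.coe_inv_eq_conj]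

lemma norm_eF (a : ℝ) : ‖eF a‖ = 1 := by
  rw [eF_eq_fourierChar]
  exact Circle.norm_coe _

lemma eF_sum {ι : Type*} (s : Finset ι) (f : ι → ℝ) :
    eF (∑ i ∈ s, f i) = ∏ i ∈ s, eF (f i) := by
  simp only [eF, Complex.ofReal_sum, Finset.mul_sum, Complex.exp_sum]

lemma integral_Icc_eF_mul_intCast (K : ℤ) :
    ∫ t in Set.Icc (0 : ℝ) 1, eF (t * K) = if K = 0 then 1 else 0 := by
  rw [integral_Icc_eq_integral_Ioc, ← intervalIntegral.integral_of_le zero_le_one]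
  split_ifs with hK
  · simp [hK, eF]
  have hc : 2 * Real.pi * Complex.I * K ≠ 0 := by simp [Real.pi_ne_zero, hK]
  have hexp : ∀ t : ℝ, eF (t * K) = Complex.exp (2 * Real.pi * Complex.I * K * t) := by
    intro t
    rw [eF]
    push_cast
    ring_nf
  simp_rw [hexp, integral_exp_mul_complex hc]
  rw [mul_comm _ (K : ℂ)]
  simp [Complex.exp_int_mul_two_pi_mul_I]

end Character

section UnitCube

lemma volume_restrict_unitCube (k : ℕ) :
    volume.restrict (unitCube k) = Measure.pi fun _ => volume.restrict (Set.Icc (0 : ℝ) 1) :=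
  Measure.restrict_pi_pi _ _

instance isProbabilityMeasure_restrict_Icc_zero_one :
    IsProbabilityMeasure (volume.restrict (Set.Icc (0 : ℝ) 1)) :=
  ⟨by simp⟩

instance isProbabilityMeasure_restrict_unitCube (k : ℕ) :
    IsProbabilityMeasure (volume.restrict (unitCube k)) := by
  rw [volume_restrict_unitCube]
  infer_instance

lemma Continuous.integrableOn_unitCube {k : ℕ} {E : Type*} [NormedAddCommGroup E]
    {f : (Fin k → ℝ) → E} (hf : Continuous f) : IntegrableOn f (unitCube k) :=
  hf.continuousOn.integrableOn_compact (isCompact_univ_pi fun _ => isCompact_Icc)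

lemma integral_unitCube_eF (k : ℕ) (K : Fin k → ℤ) :
    ∫ η in unitCube k, eF (∑ i, η i * K i) = if K = 0 then 1 else 0 := by
  simp_rw [eF_sum]
  rw [volume_restrict_unitCube, integral_fintype_prod_eq_prod fun i t => eF (t * K i)]
  simp_rw [integral_Icc_eF_mul_intCast, prod_boole, funext_iff]
  simp

end UnitCube

section WeylSum

noncomputable def intBox (P : ℕ) : Finset (ℤ × ℤ) :=
  Finset.Icc (-(P : ℤ)) P ×ˢ Finset.Icc (-(P : ℤ)) P

@[fun_prop]
lemma Continuous.fS (P : ℕ) {X : Type*} [TopologicalSpace X] {g h : X → ℝ}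
    (hg : Continuous g) (hh : Continuous h) : Continuous fun x => fS P (g x) (h x) := by
  unfold _root_.fS eF
  fun_prop

lemma norm_fS_le (P : ℕ) (a c : ℝ) : ‖fS P a c‖ ≤ 2 * P + 1 := by
  refine (norm_sum_le _ _).trans ?_
  simp only [norm_eF, sum_const, Int.card_Icc, nsmul_eq_mul, mul_one]
  rw [show (P + 1 - -P : ℤ).toNat = 2 * P + 1 by omega]
  push_cast
  rfl

lemma gS_eq_fS_zero (P : ℕ) (a : ℝ) : gS P a = fS P a 0 := by
  simp [gS, fS]

lemma norm_fS_sq (P : ℕ) (a c : ℝ) :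
    (‖fS P a c‖ ^ 2 : ℂ) = ∑ p ∈ intBox P,
      eF (a * ((p.1 : ℝ) ^ 3 - (p.2 : ℝ) ^ 3) + c * ((p.1 : ℝ) ^ 2 - (p.2 : ℝ) ^ 2)) := by
  rw [← Complex.mul_conj', fS, map_sum, sum_mul_sum, intBox, sum_product]
  refine sum_congr rfl fun x _ => sum_congr rfl fun y _ => ?_
  rw [← eF_neg, ← eF_add]
  ring_nf

end WeylSum

section Orthogonality

variable (P : ℕ) {R : ℕ} {ι : Type*} [Fintype ι] [DecidableEq ι] (D : Matrix (Fin R) ι ℤ)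

def cubicForm (T : ι → ℤ × ℤ) (i' : Fin R) : ℤ :=
  ∑ i, D i' i * ((T i).1 ^ 3 - (T i).2 ^ 3)

def quadraticPhase (b : ι → ℝ) (T : ι → ℤ × ℤ) : ℝ :=
  ∑ i, b i * (((T i).1 : ℝ) ^ 2 - ((T i).2 : ℝ) ^ 2)

lemma prod_norm_fS_sq_eq_sum (b : ι → ℝ) (η : Fin R → ℝ) :
    ((∏ i, ‖fS P (∑ i', D i' i * η i') (b i)‖ ^ 2 : ℝ) : ℂ)
      = ∑ T ∈ Fintype.piFinset fun _ => intBox P,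
          eF (quadraticPhase b T) * eF (∑ i', η i' * cubicForm D T i') := by
  push_cast
  simp_rw [norm_fS_sq, prod_univ_sum]
  refine sum_congr rfl fun T _ => ?_
  rw [← eF_sum, ← eF_add]
  congr 1
  simp only [quadraticPhase, cubicForm, Int.cast_sum, Int.cast_mul, Int.cast_sub, Int.cast_pow,
    sum_mul, mul_sum, sum_add_distrib]
  rw [add_comm]
  congr 1
  rw [sum_comm]
  exact sum_congr rfl fun i' _ => sum_congr rfl fun i _ => by ring

lemma integral_prod_norm_fS_sq (b : ι → ℝ) :
    ∫ η in unitCube R, ∏ i, ‖fS P (∑ i', D i' i * η i') (b i)‖ ^ 2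
      = (∑ T ∈ Fintype.piFinset (fun _ => intBox P) with cubicForm D T = 0,
          eF (quadraticPhase b T)).re := by
  suffices h : ((∫ η in unitCube R, ∏ i, ‖fS P (∑ i', D i' i * η i') (b i)‖ ^ 2 : ℝ) : ℂ)
      = ∑ T ∈ Fintype.piFinset (fun _ => intBox P) with cubicForm D T = 0,
          eF (quadraticPhase b T) by
    rw [← h, Complex.ofReal_re]
  have hint : ∀ T : ι → ℤ × ℤ, Integrable (fun η : Fin R → ℝ =>
      eF (quadraticPhase b T) * eF (∑ i', η i' * cubicForm D T i'))
      (volume.restrict (unitCube R)) :=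
    fun T => Continuous.integrableOn_unitCube (by unfold eF; fun_prop)
  rw [← integral_complex_ofReal]
  simp_rw [prod_norm_fS_sq_eq_sum]
  rw [integral_finsetSum _ fun T _ => hint T, sum_filter]
  simp_rw [integral_const_mul, integral_unitCube_eF, mul_ite, mul_one, mul_zero]

theorem integral_prod_norm_fS_sq_le (b : ι → ℝ) :
    ∫ η in unitCube R, ∏ i, ‖fS P (∑ i', D i' i * η i') (b i)‖ ^ 2
      ≤ ∫ η in unitCube R, ∏ i, ‖gS P (∑ i', D i' i * η i')‖ ^ 2 := by
  have h0 := integral_prod_norm_fS_sq P D 0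
  simp only [Pi.zero_apply, ← gS_eq_fS_zero] at h0
  rw [h0, integral_prod_norm_fS_sq, Complex.re_sum, Complex.re_sum]
  refine sum_le_sum fun T _ => ?_
  have h1 : eF (quadraticPhase 0 T) = 1 := by simp [quadraticPhase, eF]
  rw [h1, Complex.one_re, ← norm_eF (quadraticPhase b T)]
  exact Complex.re_le_norm _

end Orthogonality

theorem integral_prod_norm_fS_pow_le_of_even (P : ℕ) {R : ℕ} {ι : Type*} [Fintype ι]
    (D : Matrix (Fin R) ι ℤ) (b : ι → ℝ) (E : ι → ℕ) (hE : ∀ i, Even (E i)) :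
    ∫ η in unitCube R, ∏ i, ‖fS P (∑ i', D i' i * η i') (b i)‖ ^ E i
      ≤ ∫ η in unitCube R, ∏ i, ‖gS P (∑ i', D i' i * η i')‖ ^ E i := by
  classical
  choose m hm using hE
  have hprod : ∀ x : ι → ℝ, ∏ i, x i ^ E i = ∏ σ : (i : ι) × Fin (m i), x σ.1 ^ 2 := by
    intro x
    rw [← univ_sigma_univ, prod_sigma]
    simp [hm, ← two_mul, pow_mul]
  simp_rw [hprod]
  exact integral_prod_norm_fS_sq_le P (D.submatrix id Sigma.fst) (b ∘ Sigma.fst)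

lemma prod_pow_le_pow_sum_sub_mul_prod_pow {ι : Type*} [Fintype ι] {x : ι → ℝ} {M : ℝ}
    (hx : ∀ i, 0 ≤ x i) (hxM : ∀ i, x i ≤ M) {E E' : ι → ℕ} (hE : ∀ i, E i ≤ E' i) :
    ∏ i, x i ^ E' i ≤ M ^ (∑ i, (E' i - E i)) * ∏ i, x i ^ E i := by
  calc ∏ i, x i ^ E' i = (∏ i, x i ^ (E' i - E i)) * ∏ i, x i ^ E i := by
        rw [← prod_mul_distrib]
        exact prod_congr rfl fun i _ => (pow_sub_mul_pow _ (hE i)).symm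
    _ ≤ (∏ i, M ^ (E' i - E i)) * ∏ i, x i ^ E i :=
        mul_le_mul_of_nonneg_right
          (prod_le_prod (fun i _ => pow_nonneg (hx i) _)
            fun i _ => pow_le_pow_left₀ (hx i) (hxM i) _)
          (prod_nonneg fun i _ => pow_nonneg (hx i) _)
    _ = M ^ (∑ i, (E' i - E i)) * ∏ i, x i ^ E i := by rw [prod_pow_eq_pow_sum]

section MeanValue

variable (P : ℕ) {a l b : ℕ} (D3 : Matrix (Fin a) (Fin b) ℤ) (D2 : Matrix (Fin l) (Fin b) ℤ)

noncomputable def JIntegrand (E : ℕ → ℕ) (α : (Fin a → ℝ) × (Fin l → ℝ)) : ℝ :=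
  ∏ j : Fin b, ‖fS P (∑ i, (D3 i j : ℝ) * α.1 i) (∑ i, (D2 i j : ℝ) * α.2 i)‖ ^ E j

lemma JIntegrand_nonneg (E : ℕ → ℕ) (α : (Fin a → ℝ) × (Fin l → ℝ)) :
    0 ≤ JIntegrand P D3 D2 E α :=
  prod_nonneg fun _ _ => by positivity

lemma integrable_JIntegrand (E : ℕ → ℕ) :
    Integrable (JIntegrand P D3 D2 E)
      ((volume.restrict (unitCube a)).prod (volume.restrict (unitCube l))) := by
  refine .of_bound (by unfold JIntegrand; fun_prop) (∏ j : Fin b, (2 * P + 1 : ℝ) ^ E j)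
    (ae_of_all _ fun α => ?_)
  rw [Real.norm_of_nonneg (JIntegrand_nonneg P D3 D2 E α)]
  exact prod_le_prod (fun _ _ => by positivity) fun j _ => by gcongr; exact norm_fS_le P _ _

lemma JInt_eq_integral_JIntegrand (E : ℕ → ℕ) :
    JInt P D3 D2 E = ∫ α, JIntegrand P D3 D2 E α
      ∂(volume.restrict (unitCube a)).prod (volume.restrict (unitCube l)) :=
  (integral_prod _ (integrable_JIntegrand P D3 D2 E)).symm

lemma JInt_le_pow_mul_JInt {E E' : ℕ → ℕ} (hE : ∀ j < b, E j ≤ E' j) :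
    JInt P D3 D2 E' ≤ (2 * P + 1 : ℝ) ^ (∑ j : Fin b, (E' j - E j)) * JInt P D3 D2 E := by
  rw [JInt_eq_integral_JIntegrand, JInt_eq_integral_JIntegrand, ← integral_const_mul]
  refine integral_mono (integrable_JIntegrand P D3 D2 E')
    ((integrable_JIntegrand P D3 D2 E).const_mul _) fun α => ?_
  exact prod_pow_le_pow_sum_sub_mul_prod_pow (fun _ => norm_nonneg _)
    (fun _ => norm_fS_le P _ _) fun j => hE j j.2

lemma JInt_le_IInt : JInt P D3 D2 (fun j => if j < a then 2 else 4) ≤ IInt P D3 := by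
  rw [JInt_eq_integral_JIntegrand, integral_prod_symm _ (integrable_JIntegrand P D3 D2 _)]
  have hslice : ∀ α₂ : Fin l → ℝ, ∫ α₃ in unitCube a,
      JIntegrand P D3 D2 (fun j => if j < a then 2 else 4) (α₃, α₂) ≤ IInt P D3 := fun α₂ =>
    integral_prod_norm_fS_pow_le_of_even P D3 (fun j => ∑ i, (D2 i j : ℝ) * α₂ i)
      (fun j => if (j : ℕ) < a then 2 else 4) fun j => by split_ifs <;> decide
  calc ∫ α₂ in unitCube l, ∫ α₃ in unitCube a,
        JIntegrand P D3 D2 (fun j => if j < a then 2 else 4) (α₃, α₂)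
      ≤ ∫ _ in unitCube l, IInt P D3 :=
        integral_mono_of_nonneg (ae_of_all _ fun _ => integral_nonneg fun _ =>
          JIntegrand_nonneg P D3 D2 _ _) (integrable_const _) (ae_of_all _ hslice)
    _ = IInt P D3 := by simp

lemma IInt_nonneg {R S : ℕ} (D : Matrix (Fin R) (Fin S) ℤ) : 0 ≤ IInt P D :=
  integral_nonneg fun _ => prod_nonneg fun _ _ => by positivity

end MeanValue

section Exponents

variable {r l n : ℕ}

lemma le_Jexp (hn : 2 ≤ n) (j : ℕ) :
    (if j < n * (r - l) + l then 2 else 4) ≤ Jexp r l n j := by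
  unfold Jexp
  split_ifs <;> omega

lemma sum_Jexp_sub (hn : 2 ≤ n) (hrl : 2 * l ≤ r) :
    ∑ j ∈ range (2 * (n * (r - l)) + l),
      (Jexp r l n j - if j < n * (r - l) + l then 2 else 4) = 8 * l := by
  have hρ : 2 * l ≤ n * (r - l) :=
    (Nat.mul_le_mul_left 2 (by omega : l ≤ r - l)).trans (Nat.mul_le_mul_right _ hn)
  have hn1 : n ≠ 1 := by omega
  unfold Jexp
  simp only [hn1, if_false]
  generalize n * (r - l) = ρ at *
  have hconst : ∀ (m c : ℕ) (f : ℕ → ℕ), (∀ x < m, f x = c) → ∑ x ∈ range m, f x = m * c :=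
    fun m c f h => by rw [sum_congr rfl fun x hx => h x (mem_range.1 hx), sum_const, card_range,
      smul_eq_mul]
  -- the blocks where `Jexp` exceeds the exponents of `I` by `0`, `4`, `0`, `4`
  rw [show 2 * ρ + l = ρ + l + l + (ρ - 2 * l) + l by omega, sum_range_add, sum_range_add,
    sum_range_add, hconst (ρ + l) 0 _ ?_, hconst l 4 _ ?_, hconst (ρ - 2 * l) 0 _ ?_,
    hconst l 4 _ ?_]
  · ring
  all_goals
    intro x hx
    split_ifs <;> omega

end Exponents

theorem J_le_pow_mul_I_general (r l : ℕ) (hrl : 2 * l ≤ r) (n : ℕ) (hn : 2 ≤ n)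
    {R S : ℕ} (D3 : Matrix (Fin R) (Fin S) ℤ) (hD3 : IsAuxiliary r l n r 0 D3)
    (D2 : Matrix (Fin l) (Fin S) ℤ) :
    ∃ C : ℝ, ∀ P : ℕ, 0 < P →
      JInt P D3 D2 (Jexp r l n) ≤ C * (P : ℝ) ^ (8 * l) * IInt P D3 := by
  obtain ⟨hR, hS, -⟩ := hD3
  have hR' : R = n * (r - l) + l := by
    rw [hR, Nat.sub_one_mul]
    have := Nat.le_mul_of_pos_left (r - l) (by omega : 0 < n)
    omega
  subst hR'
  obtain rfl : S = 2 * (n * (r - l)) + l := by omega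
  refine ⟨3 ^ (8 * l), fun P hP => ?_⟩
  have hsum := sum_Jexp_sub hn hrl
  rw [← Fin.sum_univ_eq_sum_range] at hsum
  calc JInt P D3 D2 (Jexp r l n)
      ≤ (2 * P + 1 : ℝ) ^ (8 * l) *
          JInt P D3 D2 fun j => if j < n * (r - l) + l then 2 else 4 := by
        rw [← hsum]
        exact JInt_le_pow_mul_JInt P D3 D2 (E' := Jexp r l n) fun j _ => le_Jexp hn j
    _ ≤ (2 * P + 1 : ℝ) ^ (8 * l) * IInt P D3 :=
        mul_le_mul_of_nonneg_left (JInt_le_IInt P D3 D2) (by positivity)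
    _ ≤ 3 ^ (8 * l) * (P : ℝ) ^ (8 * l) * IInt P D3 := by
        have : (1 : ℝ) ≤ P := by exact_mod_cast hP
        rw [← mul_pow]
        gcongr
        · exact IInt_nonneg P D3
        · linarith

/-- For `n ≥ 2`, discarding the quadratic equations and estimating the eighth-power factors
trivially gives `J_n(P) ≪ P^{8l} I(P, D⁽³⁾)`, for any matrix `D⁽²⁾` of format `l × (2ρ+l)`. -/
theorem J_le_pow_mul_I (r l : ℕ) (hl : 0 < l) (hrl : 2 * l ≤ r) (n : ℕ) (hn : 2 ≤ n)
    {R S : ℕ} (D3 : Matrix (Fin R) (Fin S) ℤ) (hD3 : IsAuxiliary r l n r 0 D3)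
    (D2 : Matrix (Fin l) (Fin S) ℤ) :
    ∃ C : ℝ, ∀ P : ℕ, 0 < P →
      JInt P D3 D2 (Jexp r l n) ≤ C * (P : ℝ) ^ (8 * l) * IInt P D3 :=
  J_le_pow_mul_I_general r l hrl n hn D3 hD3 D2
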